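/- Let A be the 10×20 real matrix whose ten rows, acting on w = (w_0,…,w_19) ∈ ℝ^20, compute w_1+w_19−w_9−w_11, w_5+w_7−w_16−w_18, w_2+w_4−w_13−w_15, w_0+w_9−w_0−w_8, w_3+w_11−w_12−w_17, w_3+w_13−w_12−w_17, w_6+w_7−w_8−w_14, w_5+w_6−w_4−w_14, w_15+w_19−w_16−w_18, and w_1+w_10−w_2−w_10. Then A has full row rank 10, A𝟙 = 0 for the all-ones vector 𝟙, and for every b ∈ ℝ^10 there exists w ∈ ℝ^20 with A w = b and w_i ≥ 0 for all i. -/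
import Mathlib
set_option maxHeartbeats 1000000

/-- The length-equalization system matrix for the genus-2 (3-corner region) cutgraph pattern. -/
def Amat : Matrix (Fin 10) (Fin 20) ℝ :=
  Matrix.of ![![0,1,0,0,0,0,0,0,0,-1,0,-1,0,0,0,0,0,0,0,1],
    ![0,0,0,0,0,1,0,1,0,0,0,0,0,0,0,0,-1,0,-1,0],
    ![0,0,1,0,1,0,0,0,0,0,0,0,0,-1,0,-1,0,0,0,0],
    ![0,0,0,0,0,0,0,0,-1,1,0,0,0,0,0,0,0,0,0,0],
    ![0,0,0,1,0,0,0,0,0,0,0,1,-1,0,0,0,0,-1,0,0],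
    ![0,0,0,1,0,0,0,0,0,0,0,0,-1,1,0,0,0,-1,0,0],
    ![0,0,0,0,0,0,1,1,-1,0,0,0,0,0,-1,0,0,0,0,0],
    ![0,0,0,0,-1,1,1,0,0,0,0,0,0,0,-1,0,0,0,0,0],
    ![0,0,0,0,0,0,0,0,0,0,0,0,0,0,0,1,-1,0,-1,1],
    ![0,1,-1,0,0,0,0,0,0,0,0,0,0,0,0,0,0,0,0,0]]

@[simp] theorem cv_5_5 {α : Type*} (x : α) (u : Fin 5 → α) :
    Matrix.vecCons x u (5 : Fin 6) = u (4 : Fin 5) := rfl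
@[simp] theorem cv_6_5 {α : Type*} (x : α) (u : Fin 6 → α) :
    Matrix.vecCons x u (5 : Fin 7) = u (4 : Fin 6) := rfl
@[simp] theorem cv_6_6 {α : Type*} (x : α) (u : Fin 6 → α) :
    Matrix.vecCons x u (6 : Fin 7) = u (5 : Fin 6) := rfl
@[simp] theorem cv_7_5 {α : Type*} (x : α) (u : Fin 7 → α) :
    Matrix.vecCons x u (5 : Fin 8) = u (4 : Fin 7) := rfl
@[simp] theorem cv_7_6 {α : Type*} (x : α) (u : Fin 7 → α) :
    Matrix.vecCons x u (6 : Fin 8) = u (5 : Fin 7) := rfl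
@[simp] theorem cv_7_7 {α : Type*} (x : α) (u : Fin 7 → α) :
    Matrix.vecCons x u (7 : Fin 8) = u (6 : Fin 7) := rfl
@[simp] theorem cv_8_5 {α : Type*} (x : α) (u : Fin 8 → α) :
    Matrix.vecCons x u (5 : Fin 9) = u (4 : Fin 8) := rfl
@[simp] theorem cv_8_6 {α : Type*} (x : α) (u : Fin 8 → α) :
    Matrix.vecCons x u (6 : Fin 9) = u (5 : Fin 8) := rfl
@[simp] theorem cv_8_7 {α : Type*} (x : α) (u : Fin 8 → α) :
    Matrix.vecCons x u (7 : Fin 9) = u (6 : Fin 8) := rfl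
@[simp] theorem cv_8_8 {α : Type*} (x : α) (u : Fin 8 → α) :
    Matrix.vecCons x u (8 : Fin 9) = u (7 : Fin 8) := rfl
@[simp] theorem cv_9_5 {α : Type*} (x : α) (u : Fin 9 → α) :
    Matrix.vecCons x u (5 : Fin 10) = u (4 : Fin 9) := rfl
@[simp] theorem cv_9_6 {α : Type*} (x : α) (u : Fin 9 → α) :
    Matrix.vecCons x u (6 : Fin 10) = u (5 : Fin 9) := rfl
@[simp] theorem cv_9_7 {α : Type*} (x : α) (u : Fin 9 → α) :
    Matrix.vecCons x u (7 : Fin 10) = u (6 : Fin 9) := rfl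
@[simp] theorem cv_9_8 {α : Type*} (x : α) (u : Fin 9 → α) :
    Matrix.vecCons x u (8 : Fin 10) = u (7 : Fin 9) := rfl
@[simp] theorem cv_9_9 {α : Type*} (x : α) (u : Fin 9 → α) :
    Matrix.vecCons x u (9 : Fin 10) = u (8 : Fin 9) := rfl
@[simp] theorem cv_10_5 {α : Type*} (x : α) (u : Fin 10 → α) :
    Matrix.vecCons x u (5 : Fin 11) = u (4 : Fin 10) := rfl
@[simp] theorem cv_10_6 {α : Type*} (x : α) (u : Fin 10 → α) :
    Matrix.vecCons x u (6 : Fin 11) = u (5 : Fin 10) := rfl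
@[simp] theorem cv_10_7 {α : Type*} (x : α) (u : Fin 10 → α) :
    Matrix.vecCons x u (7 : Fin 11) = u (6 : Fin 10) := rfl
@[simp] theorem cv_10_8 {α : Type*} (x : α) (u : Fin 10 → α) :
    Matrix.vecCons x u (8 : Fin 11) = u (7 : Fin 10) := rfl
@[simp] theorem cv_10_9 {α : Type*} (x : α) (u : Fin 10 → α) :
    Matrix.vecCons x u (9 : Fin 11) = u (8 : Fin 10) := rfl
@[simp] theorem cv_10_10 {α : Type*} (x : α) (u : Fin 10 → α) :
    Matrix.vecCons x u (10 : Fin 11) = u (9 : Fin 10) := rfl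
@[simp] theorem cv_11_5 {α : Type*} (x : α) (u : Fin 11 → α) :
    Matrix.vecCons x u (5 : Fin 12) = u (4 : Fin 11) := rfl
@[simp] theorem cv_11_6 {α : Type*} (x : α) (u : Fin 11 → α) :
    Matrix.vecCons x u (6 : Fin 12) = u (5 : Fin 11) := rfl
@[simp] theorem cv_11_7 {α : Type*} (x : α) (u : Fin 11 → α) :
    Matrix.vecCons x u (7 : Fin 12) = u (6 : Fin 11) := rfl
@[simp] theorem cv_11_8 {α : Type*} (x : α) (u : Fin 11 → α) :
    Matrix.vecCons x u (8 : Fin 12) = u (7 : Fin 11) := rfl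
@[simp] theorem cv_11_9 {α : Type*} (x : α) (u : Fin 11 → α) :
    Matrix.vecCons x u (9 : Fin 12) = u (8 : Fin 11) := rfl
@[simp] theorem cv_11_10 {α : Type*} (x : α) (u : Fin 11 → α) :
    Matrix.vecCons x u (10 : Fin 12) = u (9 : Fin 11) := rfl
@[simp] theorem cv_11_11 {α : Type*} (x : α) (u : Fin 11 → α) :
    Matrix.vecCons x u (11 : Fin 12) = u (10 : Fin 11) := rfl
@[simp] theorem cv_12_5 {α : Type*} (x : α) (u : Fin 12 → α) :
    Matrix.vecCons x u (5 : Fin 13) = u (4 : Fin 12) := rfl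
@[simp] theorem cv_12_6 {α : Type*} (x : α) (u : Fin 12 → α) :
    Matrix.vecCons x u (6 : Fin 13) = u (5 : Fin 12) := rfl
@[simp] theorem cv_12_7 {α : Type*} (x : α) (u : Fin 12 → α) :
    Matrix.vecCons x u (7 : Fin 13) = u (6 : Fin 12) := rfl
@[simp] theorem cv_12_8 {α : Type*} (x : α) (u : Fin 12 → α) :
    Matrix.vecCons x u (8 : Fin 13) = u (7 : Fin 12) := rfl
@[simp] theorem cv_12_9 {α : Type*} (x : α) (u : Fin 12 → α) :
    Matrix.vecCons x u (9 : Fin 13) = u (8 : Fin 12) := rfl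
@[simp] theorem cv_12_10 {α : Type*} (x : α) (u : Fin 12 → α) :
    Matrix.vecCons x u (10 : Fin 13) = u (9 : Fin 12) := rfl
@[simp] theorem cv_12_11 {α : Type*} (x : α) (u : Fin 12 → α) :
    Matrix.vecCons x u (11 : Fin 13) = u (10 : Fin 12) := rfl
@[simp] theorem cv_12_12 {α : Type*} (x : α) (u : Fin 12 → α) :
    Matrix.vecCons x u (12 : Fin 13) = u (11 : Fin 12) := rfl
@[simp] theorem cv_13_5 {α : Type*} (x : α) (u : Fin 13 → α) :
    Matrix.vecCons x u (5 : Fin 14) = u (4 : Fin 13) := rfl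
@[simp] theorem cv_13_6 {α : Type*} (x : α) (u : Fin 13 → α) :
    Matrix.vecCons x u (6 : Fin 14) = u (5 : Fin 13) := rfl
@[simp] theorem cv_13_7 {α : Type*} (x : α) (u : Fin 13 → α) :
    Matrix.vecCons x u (7 : Fin 14) = u (6 : Fin 13) := rfl
@[simp] theorem cv_13_8 {α : Type*} (x : α) (u : Fin 13 → α) :
    Matrix.vecCons x u (8 : Fin 14) = u (7 : Fin 13) := rfl
@[simp] theorem cv_13_9 {α : Type*} (x : α) (u : Fin 13 → α) :
    Matrix.vecCons x u (9 : Fin 14) = u (8 : Fin 13) := rfl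
@[simp] theorem cv_13_10 {α : Type*} (x : α) (u : Fin 13 → α) :
    Matrix.vecCons x u (10 : Fin 14) = u (9 : Fin 13) := rfl
@[simp] theorem cv_13_11 {α : Type*} (x : α) (u : Fin 13 → α) :
    Matrix.vecCons x u (11 : Fin 14) = u (10 : Fin 13) := rfl
@[simp] theorem cv_13_12 {α : Type*} (x : α) (u : Fin 13 → α) :
    Matrix.vecCons x u (12 : Fin 14) = u (11 : Fin 13) := rfl
@[simp] theorem cv_13_13 {α : Type*} (x : α) (u : Fin 13 → α) :
    Matrix.vecCons x u (13 : Fin 14) = u (12 : Fin 13) := rfl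
@[simp] theorem cv_14_5 {α : Type*} (x : α) (u : Fin 14 → α) :
    Matrix.vecCons x u (5 : Fin 15) = u (4 : Fin 14) := rfl
@[simp] theorem cv_14_6 {α : Type*} (x : α) (u : Fin 14 → α) :
    Matrix.vecCons x u (6 : Fin 15) = u (5 : Fin 14) := rfl
@[simp] theorem cv_14_7 {α : Type*} (x : α) (u : Fin 14 → α) :
    Matrix.vecCons x u (7 : Fin 15) = u (6 : Fin 14) := rfl
@[simp] theorem cv_14_8 {α : Type*} (x : α) (u : Fin 14 → α) :
    Matrix.vecCons x u (8 : Fin 15) = u (7 : Fin 14) := rfl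
@[simp] theorem cv_14_9 {α : Type*} (x : α) (u : Fin 14 → α) :
    Matrix.vecCons x u (9 : Fin 15) = u (8 : Fin 14) := rfl
@[simp] theorem cv_14_10 {α : Type*} (x : α) (u : Fin 14 → α) :
    Matrix.vecCons x u (10 : Fin 15) = u (9 : Fin 14) := rfl
@[simp] theorem cv_14_11 {α : Type*} (x : α) (u : Fin 14 → α) :
    Matrix.vecCons x u (11 : Fin 15) = u (10 : Fin 14) := rfl
@[simp] theorem cv_14_12 {α : Type*} (x : α) (u : Fin 14 → α) :
    Matrix.vecCons x u (12 : Fin 15) = u (11 : Fin 14) := rfl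
@[simp] theorem cv_14_13 {α : Type*} (x : α) (u : Fin 14 → α) :
    Matrix.vecCons x u (13 : Fin 15) = u (12 : Fin 14) := rfl
@[simp] theorem cv_14_14 {α : Type*} (x : α) (u : Fin 14 → α) :
    Matrix.vecCons x u (14 : Fin 15) = u (13 : Fin 14) := rfl
@[simp] theorem cv_15_5 {α : Type*} (x : α) (u : Fin 15 → α) :
    Matrix.vecCons x u (5 : Fin 16) = u (4 : Fin 15) := rfl
@[simp] theorem cv_15_6 {α : Type*} (x : α) (u : Fin 15 → α) :
    Matrix.vecCons x u (6 : Fin 16) = u (5 : Fin 15) := rfl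
@[simp] theorem cv_15_7 {α : Type*} (x : α) (u : Fin 15 → α) :
    Matrix.vecCons x u (7 : Fin 16) = u (6 : Fin 15) := rfl
@[simp] theorem cv_15_8 {α : Type*} (x : α) (u : Fin 15 → α) :
    Matrix.vecCons x u (8 : Fin 16) = u (7 : Fin 15) := rfl
@[simp] theorem cv_15_9 {α : Type*} (x : α) (u : Fin 15 → α) :
    Matrix.vecCons x u (9 : Fin 16) = u (8 : Fin 15) := rfl
@[simp] theorem cv_15_10 {α : Type*} (x : α) (u : Fin 15 → α) :
    Matrix.vecCons x u (10 : Fin 16) = u (9 : Fin 15) := rfl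
@[simp] theorem cv_15_11 {α : Type*} (x : α) (u : Fin 15 → α) :
    Matrix.vecCons x u (11 : Fin 16) = u (10 : Fin 15) := rfl
@[simp] theorem cv_15_12 {α : Type*} (x : α) (u : Fin 15 → α) :
    Matrix.vecCons x u (12 : Fin 16) = u (11 : Fin 15) := rfl
@[simp] theorem cv_15_13 {α : Type*} (x : α) (u : Fin 15 → α) :
    Matrix.vecCons x u (13 : Fin 16) = u (12 : Fin 15) := rfl
@[simp] theorem cv_15_14 {α : Type*} (x : α) (u : Fin 15 → α) :
    Matrix.vecCons x u (14 : Fin 16) = u (13 : Fin 15) := rfl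
@[simp] theorem cv_15_15 {α : Type*} (x : α) (u : Fin 15 → α) :
    Matrix.vecCons x u (15 : Fin 16) = u (14 : Fin 15) := rfl
@[simp] theorem cv_16_5 {α : Type*} (x : α) (u : Fin 16 → α) :
    Matrix.vecCons x u (5 : Fin 17) = u (4 : Fin 16) := rfl
@[simp] theorem cv_16_6 {α : Type*} (x : α) (u : Fin 16 → α) :
    Matrix.vecCons x u (6 : Fin 17) = u (5 : Fin 16) := rfl
@[simp] theorem cv_16_7 {α : Type*} (x : α) (u : Fin 16 → α) :
    Matrix.vecCons x u (7 : Fin 17) = u (6 : Fin 16) := rfl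
@[simp] theorem cv_16_8 {α : Type*} (x : α) (u : Fin 16 → α) :
    Matrix.vecCons x u (8 : Fin 17) = u (7 : Fin 16) := rfl
@[simp] theorem cv_16_9 {α : Type*} (x : α) (u : Fin 16 → α) :
    Matrix.vecCons x u (9 : Fin 17) = u (8 : Fin 16) := rfl
@[simp] theorem cv_16_10 {α : Type*} (x : α) (u : Fin 16 → α) :
    Matrix.vecCons x u (10 : Fin 17) = u (9 : Fin 16) := rfl
@[simp] theorem cv_16_11 {α : Type*} (x : α) (u : Fin 16 → α) :
    Matrix.vecCons x u (11 : Fin 17) = u (10 : Fin 16) := rfl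
@[simp] theorem cv_16_12 {α : Type*} (x : α) (u : Fin 16 → α) :
    Matrix.vecCons x u (12 : Fin 17) = u (11 : Fin 16) := rfl
@[simp] theorem cv_16_13 {α : Type*} (x : α) (u : Fin 16 → α) :
    Matrix.vecCons x u (13 : Fin 17) = u (12 : Fin 16) := rfl
@[simp] theorem cv_16_14 {α : Type*} (x : α) (u : Fin 16 → α) :
    Matrix.vecCons x u (14 : Fin 17) = u (13 : Fin 16) := rfl
@[simp] theorem cv_16_15 {α : Type*} (x : α) (u : Fin 16 → α) :
    Matrix.vecCons x u (15 : Fin 17) = u (14 : Fin 16) := rfl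
@[simp] theorem cv_16_16 {α : Type*} (x : α) (u : Fin 16 → α) :
    Matrix.vecCons x u (16 : Fin 17) = u (15 : Fin 16) := rfl
@[simp] theorem cv_17_5 {α : Type*} (x : α) (u : Fin 17 → α) :
    Matrix.vecCons x u (5 : Fin 18) = u (4 : Fin 17) := rfl
@[simp] theorem cv_17_6 {α : Type*} (x : α) (u : Fin 17 → α) :
    Matrix.vecCons x u (6 : Fin 18) = u (5 : Fin 17) := rfl
@[simp] theorem cv_17_7 {α : Type*} (x : α) (u : Fin 17 → α) :
    Matrix.vecCons x u (7 : Fin 18) = u (6 : Fin 17) := rfl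
@[simp] theorem cv_17_8 {α : Type*} (x : α) (u : Fin 17 → α) :
    Matrix.vecCons x u (8 : Fin 18) = u (7 : Fin 17) := rfl
@[simp] theorem cv_17_9 {α : Type*} (x : α) (u : Fin 17 → α) :
    Matrix.vecCons x u (9 : Fin 18) = u (8 : Fin 17) := rfl
@[simp] theorem cv_17_10 {α : Type*} (x : α) (u : Fin 17 → α) :
    Matrix.vecCons x u (10 : Fin 18) = u (9 : Fin 17) := rfl
@[simp] theorem cv_17_11 {α : Type*} (x : α) (u : Fin 17 → α) :
    Matrix.vecCons x u (11 : Fin 18) = u (10 : Fin 17) := rfl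
@[simp] theorem cv_17_12 {α : Type*} (x : α) (u : Fin 17 → α) :
    Matrix.vecCons x u (12 : Fin 18) = u (11 : Fin 17) := rfl
@[simp] theorem cv_17_13 {α : Type*} (x : α) (u : Fin 17 → α) :
    Matrix.vecCons x u (13 : Fin 18) = u (12 : Fin 17) := rfl
@[simp] theorem cv_17_14 {α : Type*} (x : α) (u : Fin 17 → α) :
    Matrix.vecCons x u (14 : Fin 18) = u (13 : Fin 17) := rfl
@[simp] theorem cv_17_15 {α : Type*} (x : α) (u : Fin 17 → α) :
    Matrix.vecCons x u (15 : Fin 18) = u (14 : Fin 17) := rfl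
@[simp] theorem cv_17_16 {α : Type*} (x : α) (u : Fin 17 → α) :
    Matrix.vecCons x u (16 : Fin 18) = u (15 : Fin 17) := rfl
@[simp] theorem cv_17_17 {α : Type*} (x : α) (u : Fin 17 → α) :
    Matrix.vecCons x u (17 : Fin 18) = u (16 : Fin 17) := rfl
@[simp] theorem cv_18_5 {α : Type*} (x : α) (u : Fin 18 → α) :
    Matrix.vecCons x u (5 : Fin 19) = u (4 : Fin 18) := rfl
@[simp] theorem cv_18_6 {α : Type*} (x : α) (u : Fin 18 → α) :
    Matrix.vecCons x u (6 : Fin 19) = u (5 : Fin 18) := rfl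
@[simp] theorem cv_18_7 {α : Type*} (x : α) (u : Fin 18 → α) :
    Matrix.vecCons x u (7 : Fin 19) = u (6 : Fin 18) := rfl
@[simp] theorem cv_18_8 {α : Type*} (x : α) (u : Fin 18 → α) :
    Matrix.vecCons x u (8 : Fin 19) = u (7 : Fin 18) := rfl
@[simp] theorem cv_18_9 {α : Type*} (x : α) (u : Fin 18 → α) :
    Matrix.vecCons x u (9 : Fin 19) = u (8 : Fin 18) := rfl
@[simp] theorem cv_18_10 {α : Type*} (x : α) (u : Fin 18 → α) :
    Matrix.vecCons x u (10 : Fin 19) = u (9 : Fin 18) := rfl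
@[simp] theorem cv_18_11 {α : Type*} (x : α) (u : Fin 18 → α) :
    Matrix.vecCons x u (11 : Fin 19) = u (10 : Fin 18) := rfl
@[simp] theorem cv_18_12 {α : Type*} (x : α) (u : Fin 18 → α) :
    Matrix.vecCons x u (12 : Fin 19) = u (11 : Fin 18) := rfl
@[simp] theorem cv_18_13 {α : Type*} (x : α) (u : Fin 18 → α) :
    Matrix.vecCons x u (13 : Fin 19) = u (12 : Fin 18) := rfl
@[simp] theorem cv_18_14 {α : Type*} (x : α) (u : Fin 18 → α) :
    Matrix.vecCons x u (14 : Fin 19) = u (13 : Fin 18) := rfl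
@[simp] theorem cv_18_15 {α : Type*} (x : α) (u : Fin 18 → α) :
    Matrix.vecCons x u (15 : Fin 19) = u (14 : Fin 18) := rfl
@[simp] theorem cv_18_16 {α : Type*} (x : α) (u : Fin 18 → α) :
    Matrix.vecCons x u (16 : Fin 19) = u (15 : Fin 18) := rfl
@[simp] theorem cv_18_17 {α : Type*} (x : α) (u : Fin 18 → α) :
    Matrix.vecCons x u (17 : Fin 19) = u (16 : Fin 18) := rfl
@[simp] theorem cv_18_18 {α : Type*} (x : α) (u : Fin 18 → α) :
    Matrix.vecCons x u (18 : Fin 19) = u (17 : Fin 18) := rfl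
@[simp] theorem cv_19_5 {α : Type*} (x : α) (u : Fin 19 → α) :
    Matrix.vecCons x u (5 : Fin 20) = u (4 : Fin 19) := rfl
@[simp] theorem cv_19_6 {α : Type*} (x : α) (u : Fin 19 → α) :
    Matrix.vecCons x u (6 : Fin 20) = u (5 : Fin 19) := rfl
@[simp] theorem cv_19_7 {α : Type*} (x : α) (u : Fin 19 → α) :
    Matrix.vecCons x u (7 : Fin 20) = u (6 : Fin 19) := rfl
@[simp] theorem cv_19_8 {α : Type*} (x : α) (u : Fin 19 → α) :
    Matrix.vecCons x u (8 : Fin 20) = u (7 : Fin 19) := rfl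
@[simp] theorem cv_19_9 {α : Type*} (x : α) (u : Fin 19 → α) :
    Matrix.vecCons x u (9 : Fin 20) = u (8 : Fin 19) := rfl
@[simp] theorem cv_19_10 {α : Type*} (x : α) (u : Fin 19 → α) :
    Matrix.vecCons x u (10 : Fin 20) = u (9 : Fin 19) := rfl
@[simp] theorem cv_19_11 {α : Type*} (x : α) (u : Fin 19 → α) :
    Matrix.vecCons x u (11 : Fin 20) = u (10 : Fin 19) := rfl
@[simp] theorem cv_19_12 {α : Type*} (x : α) (u : Fin 19 → α) :
    Matrix.vecCons x u (12 : Fin 20) = u (11 : Fin 19) := rfl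
@[simp] theorem cv_19_13 {α : Type*} (x : α) (u : Fin 19 → α) :
    Matrix.vecCons x u (13 : Fin 20) = u (12 : Fin 19) := rfl
@[simp] theorem cv_19_14 {α : Type*} (x : α) (u : Fin 19 → α) :
    Matrix.vecCons x u (14 : Fin 20) = u (13 : Fin 19) := rfl
@[simp] theorem cv_19_15 {α : Type*} (x : α) (u : Fin 19 → α) :
    Matrix.vecCons x u (15 : Fin 20) = u (14 : Fin 19) := rfl
@[simp] theorem cv_19_16 {α : Type*} (x : α) (u : Fin 19 → α) :
    Matrix.vecCons x u (16 : Fin 20) = u (15 : Fin 19) := rfl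
@[simp] theorem cv_19_17 {α : Type*} (x : α) (u : Fin 19 → α) :
    Matrix.vecCons x u (17 : Fin 20) = u (16 : Fin 19) := rfl
@[simp] theorem cv_19_18 {α : Type*} (x : α) (u : Fin 19 → α) :
    Matrix.vecCons x u (18 : Fin 20) = u (17 : Fin 19) := rfl
@[simp] theorem cv_19_19 {α : Type*} (x : α) (u : Fin 19 → α) :
    Matrix.vecCons x u (19 : Fin 20) = u (18 : Fin 19) := rfl

/-- explicit particular solution to `Amat ⬝ w = b`. -/
noncomputable def baseSol (b : Fin 10 → ℝ) : Fin 20 → ℝ :=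
  ![0, b 0 + b 3, b 0 + b 3 - b 9, b 4,
    b 2 + b 5 + b 8 + b 9 - b 0 - b 3 - b 4,
    (b 1 - b 6 + b 7 + (b 2 + b 5 + b 8 + b 9 - b 0 - b 3 - b 4)) / 2,
    (b 6 + b 7 + (b 2 + b 5 + b 8 + b 9 - b 0 - b 3 - b 4) - b 1) / 2,
    b 1 - (b 1 - b 6 + b 7 + (b 2 + b 5 + b 8 + b 9 - b 0 - b 3 - b 4)) / 2,
    0, b 3, 0, 0, 0, b 5 - b 4, 0, b 8, 0, 0, 0, 0]

lemma key : ∀ b : Fin 10 → ℝ, ∃ w : Fin 20 → ℝ,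
    Amat.mulVec w = b ∧ ∀ i, 0 ≤ w i := by
  intro b
  set C : ℝ := ∑ j : Fin 20, |baseSol b j| with hC
  refine ⟨fun i => baseSol b i + C, ?_, ?_⟩
  · funext i
    fin_cases i <;>
      · simp [Amat, baseSol, Matrix.mulVec, dotProduct, Fin.sum_univ_succ]
        try ring
  · intro i
    show 0 ≤ baseSol b i + C
    have h1 : |baseSol b i| ≤ C :=
      Finset.single_le_sum (f := fun j => |baseSol b j|)
        (fun j _ => abs_nonneg _) (Finset.mem_univ i)
    have h2 := neg_abs_le (baseSol b i)
    linarith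

/-- The matrix has full row rank 10, the all-ones vector lies in its kernel, and
the system `A w = b` has a non-negative solution for every right-hand side `b`. -/
theorem equalizable :
    Amat.rank = 10 ∧ Amat.mulVec (fun _ => 1) = 0 ∧
    ∀ b : Fin 10 → ℝ, ∃ w : Fin 20 → ℝ, Amat.mulVec w = b ∧ ∀ i, 0 ≤ w i := by
  refine ⟨?_, ?_, key⟩
  · have hsurj : Function.Surjective Amat.mulVecLin := by
      intro b
      obtain ⟨w, hw, -⟩ := key b
      exact ⟨w, hw⟩
    have hr : LinearMap.range Amat.mulVecLin = ⊤ := LinearMap.range_eq_top.mpr hsurj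
    rw [Matrix.rank, hr]
    simp [Module.finrank_fintype_fun_eq_card]
  · funext i
    fin_cases i <;>
      · simp [Amat, Matrix.mulVec, dotProduct, Fin.sum_univ_succ]
        try ring
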